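/- Let A ⊂ (0,1) be a finite set and suppose r ∈ (0,1) satisfies: there exist λ > 0 and elements y_0, y_1, y_2, ... ∈ A^{Z_+} with λ y_k = θ' r^k for all k ∈ ℕ (for some θ' > 0). Then r ∈ A^{Q_+*}. -/

import Mathlib

/-- `A^{Z_+^*}`: products of elements of `A` with nonnegative integer exponents, not all zero. -/
def ZProdStar (A : Finset ℝ) : Set ℝ :=
  {y | ∃ m : ℝ → ℕ, (∃ a ∈ A, m a ≠ 0) ∧ y = ∏ a ∈ A, a ^ m a}

/-- `A^{Z_+} = {1} ∪ A^{Z_+^*}`. -/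
def ZProd (A : Finset ℝ) : Set ℝ := {1} ∪ ZProdStar A

/-- `A^{Q_+^*}`: products with nonnegative rational exponents, not all zero. -/
def QProdStar (A : Finset ℝ) : Set ℝ :=
  {y | ∃ q : ℝ → ℚ, (∀ a ∈ A, 0 ≤ q a) ∧ (∃ a ∈ A, q a ≠ 0) ∧
    y = ∏ a ∈ A, a ^ ((q a : ℝ))}

/-- `R_Θ(θ)`: common ratios of geometric sequences contained in `Θ` passing through `θ`. -/
def RSet (Θ : Set ℝ) (θ : ℝ) : Set ℝ :=
  {r | 0 < r ∧ r < 1 ∧ ∃ θ' ∈ Θ, (∃ k : ℕ, θ = θ' * r ^ k) ∧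
    ∀ k : ℕ, θ' * r ^ k ∈ Θ}

/-!
Write `y k = ∏ a ^ (m k a)`. By Dickson's lemma there are `k < l` with `m k ≤ m l` on `A`;
dividing the two products gives `r ^ (l - k) = ∏ a ^ (m l a - m k a)`, and taking the
`(l - k)`-th root exhibits `r` with rational exponents, not all zero because `r ≠ 1`.
-/

lemma exists_eq_prod_pow_of_mem_ZProd {A : Finset ℝ} {y : ℝ} (hy : y ∈ ZProd A) :
    ∃ m : ℝ → ℕ, y = ∏ a ∈ A, a ^ m a := by
  rcases hy with rfl | ⟨m, -, rfl⟩
  · exact ⟨fun _ => 0, by simp⟩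
  · exact ⟨m, rfl⟩

lemma Finset.exists_lt_forall_le_of_wellQuasiOrderedLE {α β : Type*} [Preorder β]
    [WellQuasiOrderedLE β] (s : Finset α) (f : ℕ → α → β) :
    ∃ k l, k < l ∧ ∀ a ∈ s, f k a ≤ f l a := by
  obtain ⟨k, l, hkl, hle⟩ := (Set.isPWO_of_wellQuasiOrderedLE (Set.univ : Set (s → β))).exists_lt
    (f := fun k (a : s) => f k a) fun _ => Set.mem_univ _
  exact ⟨k, l, hkl, fun a ha => hle ⟨a, ha⟩⟩

lemma Finset.prod_pow_eq_prod_pow_mul_prod_pow_sub {M α : Type*} [CommMonoid M] (s : Finset α)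
    (g : α → M) {m n : α → ℕ} (hmn : ∀ a ∈ s, m a ≤ n a) :
    ∏ a ∈ s, g a ^ n a = (∏ a ∈ s, g a ^ m a) * ∏ a ∈ s, g a ^ (n a - m a) := by
  rw [← Finset.prod_mul_distrib]
  refine Finset.prod_congr rfl fun a ha => ?_
  rw [← pow_add, Nat.add_sub_cancel' (hmn a ha)]

lemma eq_mul_pow_sub_of_forall_mul_eq_mul_pow {R : Type*} [CommRing R] [IsDomain R]
    {lam θ r : R} {y : ℕ → R} (hlam : lam ≠ 0) (heq : ∀ k, lam * y k = θ * r ^ k)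
    {k l : ℕ} (hkl : k ≤ l) : y l = y k * r ^ (l - k) := by
  refine mul_left_cancel₀ hlam ?_
  rw [heq, ← mul_assoc, heq, mul_assoc, ← pow_add, Nat.add_sub_cancel' hkl]

lemma mem_QProdStar_of_pow_eq_prod_pow {A : Finset ℝ} (hA : ∀ a ∈ A, 0 ≤ a) {r : ℝ}
    (hr0 : 0 ≤ r) (hr1 : r ≠ 1) {d : ℕ} (hd : d ≠ 0) {e : ℝ → ℕ}
    (h : r ^ d = ∏ a ∈ A, a ^ e a) : r ∈ QProdStar A := by
  refine ⟨fun a => e a / d, fun a _ => by positivity, ?_, ?_⟩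
  · by_contra! he
    have he : ∀ a ∈ A, e a = 0 := fun a ha => by simpa [hd] using he a ha
    rw [Finset.prod_congr rfl fun a ha => by rw [he a ha, pow_zero], Finset.prod_const_one,
      pow_eq_one_iff_of_nonneg hr0 hd] at h
    exact hr1 h
  · calc r = (∏ a ∈ A, a ^ e a) ^ (d⁻¹ : ℝ) := by rw [← h, Real.pow_rpow_inv_natCast hr0 hd]
      _ = ∏ a ∈ A, a ^ ((e a / d : ℚ) : ℝ) := by
        rw [← Real.finsetProd_rpow A _ fun a ha => pow_nonneg (hA a ha) _]
        refine Finset.prod_congr rfl fun a ha => ?_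
        rw [← Real.rpow_natCast, ← Real.rpow_mul (hA a ha)]
        push_cast
        ring_nf

theorem stmt19_general (A : Finset ℝ) (hA : ∀ a ∈ A, a ∈ Set.Ioo (0:ℝ) 1)
    (r : ℝ) (hr : r ∈ Set.Ioo (0:ℝ) 1) (lam θ' : ℝ) (hlam : 0 < lam)
    (y : ℕ → ℝ) (hy : ∀ k, y k ∈ ZProd A)
    (heq : ∀ k : ℕ, lam * y k = θ' * r ^ k) : r ∈ QProdStar A := by
  choose m hm using fun k => exists_eq_prod_pow_of_mem_ZProd (hy k)
  obtain ⟨k, l, hkl, hle⟩ := A.exists_lt_forall_le_of_wellQuasiOrderedLE m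
  have hyk : y k ≠ 0 := by
    rw [hm k]
    exact Finset.prod_ne_zero_iff.2 fun a ha => pow_ne_zero _ (hA a ha).1.ne'
  have hpow : r ^ (l - k) = ∏ a ∈ A, a ^ (m l a - m k a) := by
    have hyl := eq_mul_pow_sub_of_forall_mul_eq_mul_pow hlam.ne' heq hkl.le
    rw [hm l, A.prod_pow_eq_prod_pow_mul_prod_pow_sub _ hle, ← hm k] at hyl
    exact (mul_left_cancel₀ hyk hyl).symm
  exact mem_QProdStar_of_pow_eq_prod_pow (fun a ha => (hA a ha).1.le) hr.1.le hr.2.ne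
    (Nat.sub_ne_zero_of_lt hkl) hpow

theorem stmt19 (A : Finset ℝ) (hA : ∀ a ∈ A, a ∈ Set.Ioo (0:ℝ) 1)
    (r : ℝ) (hr : r ∈ Set.Ioo (0:ℝ) 1) (lam θ' : ℝ) (hlam : 0 < lam)
    (hθ' : 0 < θ') (y : ℕ → ℝ) (hy : ∀ k, y k ∈ ZProd A)
    (heq : ∀ k : ℕ, lam * y k = θ' * r ^ k) : r ∈ QProdStar A :=
  stmt19_general A hA r hr lam θ' hlam y hy heq
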